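/- arXiv:1510.08906 — 10 statements merged into one kernel-verified Lean document; each statement's English description precedes it below -/
import Mathlib

section
/- The variance of the value function satisfies a Bellman equation: 𝒱_{j:j}(s) = 0 for all s ∈ S, and for all 1 ≤ i < j ≤ H and all s ∈ S, 𝒱_{i:j}(s) = (P_i 𝒱_{i+1:j})(s) + σ²_{i:j}(s). -/
open Finset

/-- The operator `(P_t f)(s) = ∑_{s'} p_t(s,s') f(s')` induced by transition matrices `p`. -/
noncomputable def Pop {S : Type*} [Fintype S] (p : ℕ → S → S → ℝ) (t : ℕ) (f : S → ℝ) (s : S) : ℝ :=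
  ∑ s', p t s s' * f s'

/-- The multi-step operator `P_{i:j} = P_i P_{i+1} ⋯ P_j` (identity when `j < i`). -/
noncomputable def PC {S : Type*} [Fintype S] (p : ℕ → S → S → ℝ) (i j : ℕ) (f : S → ℝ) : S → ℝ :=
  (List.range' i (j + 1 - i)).foldr (fun t g => Pop p t g) f

/-- The value function: `V_{j:j} = r_j`, `V_{i:j} = r_i + P_i V_{i+1:j}` for `i < j`. -/
noncomputable def Vf {S : Type*} [Fintype S] (p : ℕ → S → S → ℝ) (r : ℕ → S → ℝ)
    (i j : ℕ) : S → ℝ :=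
  if _h : i < j then fun s => r i s + Pop p i (Vf p r (i + 1) j) s
  else r j
termination_by j - i
decreasing_by omega

/-- The trajectory `s_i = s, s_{i+1} = σ 0, …, s_{i+k} = σ (k-1)` as a function of time
(states outside `{i, …, i+k}` are irrelevant and set to `s`, resp. `σ`'s last values). -/
def pathFn {S : Type*} (s : S) (i : ℕ) {k : ℕ} (σ : Fin k → S) (t : ℕ) : S :=
  if h : i < t ∧ t - i - 1 < k then σ ⟨t - i - 1, h.2⟩ else s

/-- Expectation over trajectories of the Markov chain started in state `s` at time `i`,
running until time `j`: `E_{s,i:j}[g] = ∑_{s_{i+1},…,s_j} (∏_{t=i}^{j-1} p_t(s_t,s_{t+1})) g(s_i,…,s_j)`. -/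
noncomputable def Ex {S : Type*} [Fintype S] (p : ℕ → S → S → ℝ) (i j : ℕ) (s : S)
    (g : (ℕ → S) → ℝ) : ℝ :=
  ∑ σ : Fin (j - i) → S,
    (∏ t ∈ Finset.Ico i j, p t (pathFn s i σ t) (pathFn s i σ (t + 1))) * g (pathFn s i σ)

/-- The local variance of the value function:
`σ²_{i:j}(s) = ∑_{s'} p_i(s,s') (V_{i+1:j}(s') − (P_i V_{i+1:j})(s))²` for `i < j`, and `0` else. -/
noncomputable def sigmaSq {S : Type*} [Fintype S] (p : ℕ → S → S → ℝ) (r : ℕ → S → ℝ)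
    (i j : ℕ) (s : S) : ℝ :=
  if i < j then
    ∑ s', p i s s' * (Vf p r (i + 1) j s' - Pop p i (Vf p r (i + 1) j) s) ^ 2
  else 0

/-- The variance of the value function:
`𝒱_{i:j}(s) = E_{s,i:j}[(∑_{t=i}^j r_t(s_t) − V_{i:j}(s))²]`. -/
noncomputable def VarV {S : Type*} [Fintype S] (p : ℕ → S → S → ℝ) (r : ℕ → S → ℝ)
    (i j : ℕ) (s : S) : ℝ :=
  Ex p i j s (fun τ => ((∑ t ∈ Finset.Icc i j, r t (τ t)) - Vf p r i j s) ^ 2)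

/-! Summing first over the state `s'` at time `i + 1` splits the trajectory expectation as
`E_{s,i:j}[g] = ∑ p_i(s,s') E_{s',i+1:j}[g(s, ·)]`. Along a trajectory the return from time `i`
is `r_i(s)` plus the return from `i + 1`, whose expectation is `V_{i+1:j}(s')`, so the bias–variance
identity `E(X - a)² = E(X - EX)² + (EX - a)²` with `a = (P_i V_{i+1:j})(s)` splits each summand
into `𝒱_{i+1:j}(s')` and the local term of `σ²_{i:j}(s)`. -/

lemma pathFn_self {S : Type*} (s : S) (i : ℕ) {k : ℕ} (σ : Fin k → S) : pathFn s i σ i = s := by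
  simp [pathFn]

lemma pathFn_cons {S : Type*} (s s' : S) (i : ℕ) {k : ℕ} (σ : Fin k → S) {t : ℕ}
    (ht : t ≤ i + 1 + k) :
    pathFn s i (Fin.cons s' σ : Fin (k + 1) → S) t =
      if t ≤ i then s else pathFn s' (i + 1) σ t := by
  unfold pathFn
  split_ifs with h₁ h₂ h₃ h₃
  · omega
  · rw [show (⟨t - i - 1, h₁.2⟩ : Fin (k + 1)) = Fin.succ ⟨t - (i + 1) - 1, h₃.2⟩ from
      Fin.ext (by simp; omega), Fin.cons_succ]
  · rw [show (⟨t - i - 1, h₁.2⟩ : Fin (k + 1)) = 0 from Fin.ext (by simp; omega), Fin.cons_zero]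
  · rfl
  · omega
  · omega

lemma sum_Icc_ite_le {M : Type*} [AddCommMonoid M] {S : Type*} (f : ℕ → S → M) {i j : ℕ}
    (hij : i ≤ j) (s : S) (τ : ℕ → S) :
    ∑ t ∈ Icc i j, f t (if t ≤ i then s else τ t) = f i s + ∑ t ∈ Icc (i + 1) j, f t (τ t) := by
  rw [← add_sum_Ioc_eq_sum_Icc hij, if_pos le_rfl, Icc_add_one_left_eq_Ioc]
  congr 1
  exact sum_congr rfl fun t ht => by rw [if_neg (by simp at ht; omega)]

section Value

variable {S : Type*} [Fintype S] (p : ℕ → S → S → ℝ) (r : ℕ → S → ℝ)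

lemma Vf_self (j : ℕ) : Vf p r j j = r j := by
  rw [Vf, dif_neg (lt_irrefl j)]

lemma Vf_of_lt {i j : ℕ} (hij : i < j) (s : S) :
    Vf p r i j s = r i s + Pop p i (Vf p r (i + 1) j) s := by
  rw [Vf, dif_pos hij]

end Value

section Trajectories

variable {S : Type*} [Fintype S] (p : ℕ → S → S → ℝ)

lemma Ex_add (i j : ℕ) (s : S) (f g : (ℕ → S) → ℝ) :
    Ex p i j s (fun τ => f τ + g τ) = Ex p i j s f + Ex p i j s g := by
  simp only [Ex, mul_add, sum_add_distrib]

lemma Ex_const_mul (i j : ℕ) (s : S) (c : ℝ) (g : (ℕ → S) → ℝ) :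
    Ex p i j s (fun τ => c * g τ) = c * Ex p i j s g := by
  simp only [Ex, mul_sum]
  exact sum_congr rfl fun _ _ => by ring

lemma Ex_self (i : ℕ) (s : S) (g : (ℕ → S) → ℝ) : Ex p i i s g = g fun _ => s := by
  unfold Ex
  rw [Nat.sub_self, Fintype.sum_unique, Ico_self, prod_empty, one_mul]
  congr 1
  funext t
  simp [pathFn]

/-- `pathFn` pads a trajectory with its initial state outside `[i, j]`, so the decomposition only
holds for functionals that ignore those times. -/
lemma Ex_of_lt {i j : ℕ} (hij : i < j) (s : S) (g : (ℕ → S) → ℝ)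
    (hg : ∀ τ τ' : ℕ → S, (∀ t ∈ Icc i j, τ t = τ' t) → g τ = g τ') :
    Ex p i j s g =
      ∑ s', p i s s' * Ex p (i + 1) j s' fun τ => g fun t => if t ≤ i then s else τ t := by
  obtain ⟨k, rfl⟩ : ∃ k, j = i + 1 + k := ⟨j - (i + 1), by omega⟩
  unfold Ex
  rw [show i + 1 + k - i = k + 1 by omega, show i + 1 + k - (i + 1) = k by omega,
    ← (Fin.consEquiv fun _ => S).sum_comp, Fintype.sum_prod_type]
  refine sum_congr rfl fun s' _ => ?_
  rw [mul_sum]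
  refine sum_congr rfl fun σ _ => ?_
  have hpath : ∀ t ≤ i + 1 + k, pathFn s i ((Fin.consEquiv fun _ => S) (s', σ)) t =
      if t ≤ i then s else pathFn s' (i + 1) σ t := fun t ht => pathFn_cons s s' i σ ht
  rw [prod_eq_prod_Ico_succ_bot (by omega), hpath i (by omega), hpath (i + 1) (by omega),
    if_pos le_rfl, if_neg (by omega), pathFn_self, prod_congr rfl fun t ht => by
      rw [hpath t (by simp at ht; omega), hpath (t + 1) (by simp at ht; omega),
        if_neg (by simp at ht; omega), if_neg (by simp at ht; omega)],
    hg _ _ fun t ht => hpath t (mem_Icc.1 ht).2]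
  ring

variable {p}

lemma Ex_const {i j : ℕ} (hij : i ≤ j) (hp : ∀ t ∈ Ico i j, ∀ s, ∑ s', p t s s' = 1)
    (s : S) (c : ℝ) : Ex p i j s (fun _ => c) = c := by
  induction hij using Nat.decreasingInduction generalizing s with
  | self => exact Ex_self p j s _
  | of_succ i hij ih =>
    have hp' : ∀ t ∈ Ico (i + 1) j, ∀ s, ∑ s', p t s s' = 1 :=
      fun t ht => hp t (Ico_subset_Ico_left i.le_succ ht)
    rw [Ex_of_lt p hij s _ fun _ _ _ => rfl]
    simp only [ih hp', ← sum_mul, hp i (left_mem_Ico.2 hij) s, one_mul]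

lemma Ex_const_add {i j : ℕ} (hij : i ≤ j) (hp : ∀ t ∈ Ico i j, ∀ s, ∑ s', p t s s' = 1)
    (s : S) (c : ℝ) (g : (ℕ → S) → ℝ) : Ex p i j s (fun τ => c + g τ) = c + Ex p i j s g := by
  rw [Ex_add, Ex_const hij hp]

lemma Ex_sub_sq {i j : ℕ} (hij : i ≤ j) (hp : ∀ t ∈ Ico i j, ∀ s, ∑ s', p t s s' = 1)
    (s : S) (g : (ℕ → S) → ℝ) (a : ℝ) :
    Ex p i j s (fun τ => (g τ - a) ^ 2) =
      Ex p i j s (fun τ => (g τ - Ex p i j s g) ^ 2) + (Ex p i j s g - a) ^ 2 := by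
  set m := Ex p i j s g
  have hexpand : (fun τ => (g τ - a) ^ 2) =
      fun τ => (g τ - m) ^ 2 + ((a ^ 2 - m ^ 2) + 2 * (m - a) * g τ) := by
    funext τ; ring
  rw [hexpand, Ex_add, Ex_const_add hij hp, Ex_const_mul]
  ring

lemma Ex_sum_reward (r : ℕ → S → ℝ) {i j : ℕ} (hij : i ≤ j)
    (hp : ∀ t ∈ Ico i j, ∀ s, ∑ s', p t s s' = 1) (s : S) :
    Ex p i j s (fun τ => ∑ t ∈ Icc i j, r t (τ t)) = Vf p r i j s := by
  induction hij using Nat.decreasingInduction generalizing s with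
  | self => simp [Ex_self, Vf_self]
  | of_succ i hij ih =>
    have hp' : ∀ t ∈ Ico (i + 1) j, ∀ s, ∑ s', p t s s' = 1 :=
      fun t ht => hp t (Ico_subset_Ico_left i.le_succ ht)
    rw [Ex_of_lt p hij s _ fun τ τ' h => sum_congr rfl fun t ht => by rw [h t ht]]
    simp only [sum_Icc_ite_le r hij.le, Ex_const_add hij hp', ih hp', mul_add, sum_add_distrib,
      ← sum_mul, hp i (left_mem_Ico.2 hij) s, one_mul, Vf_of_lt p r hij, Pop]

end Trajectories

theorem variance_bellman_equation_general
    {S : Type*} [Fintype S] (H : ℕ)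
    (r : ℕ → S → ℝ) (p : ℕ → S → S → ℝ)
    (hp_sum : ∀ t, 1 ≤ t → t ≤ H → ∀ s, ∑ s', p t s s' = 1) :
    (∀ j, 1 ≤ j → j ≤ H → ∀ s : S, VarV p r j j s = 0) ∧
    (∀ i j, 1 ≤ i → i < j → j ≤ H → ∀ s : S,
      VarV p r i j s = Pop p i (VarV p r (i + 1) j) s + sigmaSq p r i j s) := by
  refine ⟨fun j _ _ s => by simp [VarV, Ex_self, Vf_self], fun i j hi hij hj s => ?_⟩
  have hp : ∀ t ∈ Ico (i + 1) j, ∀ s, ∑ s', p t s s' = 1 :=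
    fun t ht => hp_sum t (by simp at ht; omega) (by simp at ht; omega)
  have hstep : ∀ s', Ex p (i + 1) j s'
      (fun τ => (∑ t ∈ Icc i j, r t (if t ≤ i then s else τ t) - Vf p r i j s) ^ 2) =
      VarV p r (i + 1) j s' + (Vf p r (i + 1) j s' - Pop p i (Vf p r (i + 1) j) s) ^ 2 := by
    intro s'
    simp only [sum_Icc_ite_le r hij.le, Vf_of_lt p r hij, add_sub_add_left_eq_sub]
    rw [Ex_sub_sq hij hp, Ex_sum_reward r hij hp]
    rfl
  rw [VarV, Ex_of_lt p hij s _ fun τ τ' h => by rw [sum_congr rfl fun t ht => by rw [h t ht]]]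
  simp only [hstep, mul_add, sum_add_distrib, sigmaSq, if_pos hij]
  rfl

/-- The variance of the value function satisfies a Bellman equation. -/
theorem variance_bellman_equation
    {S : Type*} [Fintype S] [Nonempty S] (H : ℕ) (hH : 1 ≤ H)
    (r : ℕ → S → ℝ) (p : ℕ → S → S → ℝ)
    (hp_nonneg : ∀ t, 1 ≤ t → t ≤ H → ∀ s s', 0 ≤ p t s s')
    (hp_sum : ∀ t, 1 ≤ t → t ≤ H → ∀ s, ∑ s', p t s s' = 1) :
    (∀ j, 1 ≤ j → j ≤ H → ∀ s : S, VarV p r j j s = 0) ∧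
    (∀ i j, 1 ≤ i → i < j → j ≤ H → ∀ s : S,
      VarV p r i j s = Pop p i (VarV p r (i + 1) j) s + sigmaSq p r i j s) :=
  variance_bellman_equation_general H r p hp_sum
end

section
/- Let p, p̂ ∈ [0,1] be reals, n ≥ 2 an integer, and L ≥ 0 a real. If |p − p̂| ≤ √(2 p(1−p) L / n) + L/(3n) and |√(p(1−p)) − √(p̂(1−p̂))| ≤ √(2L/(n−1)), then |p − p̂| ≤ √(2 p̂(1−p̂) L / n) + 7L/(3(n−1)). -/
/-! The Bernstein width √(2σ²L/n) factors as √(2L/n)·σ. Replacing the true standard deviation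
σ by the empirical one σ̂ costs at most √(2L/n)·√(2L/(n-1)) ≤ 2L/(n-1), and together with
L/(3n) ≤ L/(3(n-1)) this gives the stated 7L/(3(n-1)). -/

theorem Real.sqrt_mul_sqrt_le_of_le {a b : ℝ} (hab : a ≤ b) (hb : 0 ≤ b) :
    √a * √b ≤ b :=
  calc √a * √b ≤ √b * √b := by gcongr
    _ = b := Real.mul_self_sqrt hb

theorem sqrt_two_mul_variance_mul_div (x L m : ℝ) (hL : 0 ≤ L) (hm : 0 ≤ m) :
    √(2 * x * (1 - x) * L / m) = √(2 * L / m) * √(x * (1 - x)) := by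
  rw [← Real.sqrt_mul (by positivity)]
  ring_nf

theorem bernstein_empirical_variance_bound_general
    (p phat : ℝ)
    (n : ℕ) (hn : 2 ≤ n) (L : ℝ) (hL : 0 ≤ L)
    (h1 : |p - phat| ≤ Real.sqrt (2 * p * (1 - p) * L / n) + L / (3 * n))
    (h2 : |Real.sqrt (p * (1 - p)) - Real.sqrt (phat * (1 - phat))| ≤
      Real.sqrt (2 * L / ((n : ℝ) - 1))) :
    |p - phat| ≤ Real.sqrt (2 * phat * (1 - phat) * L / n) + 7 * L / (3 * ((n : ℝ) - 1)) := by
  have hn1 : (0 : ℝ) < n - 1 := by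
    have : (2 : ℝ) ≤ n := by exact_mod_cast hn
    linarith
  have hσ : √(p * (1 - p)) ≤ √(phat * (1 - phat)) + √(2 * L / (n - 1)) := by
    linarith [(abs_le.mp h2).2]
  have hcross : √(2 * L / n) * √(2 * L / (n - 1)) ≤ 2 * L / (n - 1) :=
    Real.sqrt_mul_sqrt_le_of_le (by gcongr; linarith) (by positivity)
  have hlin : L / (3 * n) ≤ L / (3 * (n - 1)) := by gcongr; linarith
  have hsplit : 7 * L / (3 * ((n : ℝ) - 1)) = 2 * L / (n - 1) + L / (3 * (n - 1)) := by
    field_simp; ring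
  rw [sqrt_two_mul_variance_mul_div _ _ _ hL n.cast_nonneg] at h1 ⊢
  calc |p - phat|
      ≤ √(2 * L / n) * (√(phat * (1 - phat)) + √(2 * L / (n - 1))) + L / (3 * (n - 1)) := by
        have := mul_le_mul_of_nonneg_left hσ (Real.sqrt_nonneg (2 * L / n))
        linarith
    _ ≤ √(2 * L / n) * √(phat * (1 - phat)) + 7 * L / (3 * ((n : ℝ) - 1)) := by
        rw [mul_add, hsplit]
        linarith

/-- Converting a Bernstein-type bound in terms of the true variance into one in terms of
the empirical variance, using closeness of the standard deviations. -/
theorem bernstein_empirical_variance_bound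
    (p phat : ℝ) (hp0 : 0 ≤ p) (hp1 : p ≤ 1) (hphat0 : 0 ≤ phat) (hphat1 : phat ≤ 1)
    (n : ℕ) (hn : 2 ≤ n) (L : ℝ) (hL : 0 ≤ L)
    (h1 : |p - phat| ≤ Real.sqrt (2 * p * (1 - p) * L / n) + L / (3 * n))
    (h2 : |Real.sqrt (p * (1 - p)) - Real.sqrt (phat * (1 - phat))| ≤
      Real.sqrt (2 * L / ((n : ℝ) - 1))) :
    |p - phat| ≤ Real.sqrt (2 * phat * (1 - phat) * L / n) + 7 * L / (3 * ((n : ℝ) - 1)) :=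
  bernstein_empirical_variance_bound_general p phat n hn L hL h1 h2
end

section
/- For any p̂ ∈ [0,1], any integer n ≥ 2 and any real L > 0, the set 𝒫₁(p̂,n,L) := { p' ∈ [0,1] : |p̂ − p'| ≤ √(L/(2n)), |p̂ − p'| ≤ √(2 p̂ (1−p̂) L / n) + 7L/(3(n−1)), and p'(1−p') ≥ (max{0, √(p̂(1−p̂)) − √(2L/(n−1))})² } is a convex subset of ℝ, and 𝒫(p̂,n,L) ⊆ 𝒫₁(p̂,n,L). -/
/-- The confidence set `𝒫(p̂,n,L)` of transition probabilities. -/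
def confSet (phat : ℝ) (n : ℕ) (L : ℝ) : Set ℝ :=
  {p' | 0 ≤ p' ∧ p' ≤ 1 ∧
    |Real.sqrt (p' * (1 - p')) - Real.sqrt (phat * (1 - phat))| ≤
      Real.sqrt (2 * L / ((n : ℝ) - 1)) ∧
    |phat - p'| ≤ Real.sqrt (L / (2 * n)) ∧
    |phat - p'| ≤ Real.sqrt (2 * phat * (1 - phat) * L / n) + 7 * L / (3 * ((n : ℝ) - 1))}

/-- The relaxed confidence set `𝒫₁(p̂,n,L)`. -/
def confSet1 (phat : ℝ) (n : ℕ) (L : ℝ) : Set ℝ :=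
  {p' | 0 ≤ p' ∧ p' ≤ 1 ∧
    |phat - p'| ≤ Real.sqrt (L / (2 * n)) ∧
    |phat - p'| ≤ Real.sqrt (2 * phat * (1 - phat) * L / n) + 7 * L / (3 * ((n : ℝ) - 1)) ∧
    (max 0 (Real.sqrt (phat * (1 - phat)) - Real.sqrt (2 * L / ((n : ℝ) - 1)))) ^ 2 ≤
      p' * (1 - p')}

/-!
`𝒫₁` is an intersection of intervals with a superlevel set of the concave function
`p ↦ p (1 - p)`, hence convex. A point of `𝒫` has `√(p'(1-p')) ≥ √(p̂(1-p̂)) - √(2L/(n-1))`,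
and squaring the nonnegative part of this lower bound gives the last condition of `𝒫₁`.
-/

theorem convex_setOf_abs_sub_le (a r : ℝ) : Convex ℝ {x : ℝ | |a - x| ≤ r} := by
  simpa [Metric.closedBall, Real.dist_eq, abs_sub_comm] using convex_closedBall a r

theorem concaveOn_mul_one_sub : ConcaveOn ℝ Set.univ (fun x : ℝ => x * (1 - x)) :=
  ((concaveOn_id convex_univ).sub (even_two.convexOn_pow (𝕜 := ℝ))).congr
    fun x _ => by simp only [Pi.sub_apply, id]; ring

theorem convex_setOf_le_mul_one_sub (m : ℝ) : Convex ℝ {x : ℝ | m ≤ x * (1 - x)} := by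
  simpa using concaveOn_mul_one_sub.convex_ge m

theorem convex_confSet1 (phat : ℝ) (n : ℕ) (L : ℝ) : Convex ℝ (confSet1 phat n L) := by
  simp only [confSet1, Set.ofPred_and]
  exact (convex_Ici 0).inter <| (convex_Iic 1).inter <| (convex_setOf_abs_sub_le _ _).inter <|
    (convex_setOf_abs_sub_le _ _).inter (convex_setOf_le_mul_one_sub _)

theorem sq_max_zero_sub_le_sq_of_abs_sub_le {x y s : ℝ} (hx : 0 ≤ x) (h : |x - y| ≤ s) :
    (max 0 (y - s)) ^ 2 ≤ x ^ 2 := by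
  have hys : y - s ≤ x := by linarith [(abs_le.mp h).1]
  exact pow_le_pow_left₀ (le_max_left _ _) (max_le hx hys) 2

theorem confSet1_convex_and_confSet_subset_general
    (phat : ℝ)
    (n : ℕ) (L : ℝ) :
    Convex ℝ (confSet1 phat n L) ∧ confSet phat n L ⊆ confSet1 phat n L := by
  refine ⟨convex_confSet1 phat n L, ?_⟩
  rintro p ⟨hp0, hp1, hsqrt, hdev, hbernstein⟩
  refine ⟨hp0, hp1, hdev, hbernstein, ?_⟩
  have hvar : 0 ≤ p * (1 - p) := mul_nonneg hp0 (sub_nonneg.mpr hp1)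
  simpa only [Real.sq_sqrt hvar] using
    sq_max_zero_sub_le_sq_of_abs_sub_le (Real.sqrt_nonneg _) hsqrt

/-- `𝒫₁(p̂,n,L)` is convex and contains the confidence set `𝒫(p̂,n,L)`. -/
theorem confSet1_convex_and_confSet_subset
    (phat : ℝ) (hphat0 : 0 ≤ phat) (hphat1 : phat ≤ 1)
    (n : ℕ) (hn : 2 ≤ n) (L : ℝ) (hL : 0 < L) :
    Convex ℝ (confSet1 phat n L) ∧ confSet phat n L ⊆ confSet1 phat n L :=
  confSet1_convex_and_confSet_subset_general phat n L
end

section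
/- Let p̂ ∈ [0,1], n ≥ 2 an integer, and L > 0 a real. If p ∈ 𝒫(p̂,n,L) and p̃ belongs to the convex hull of 𝒫(p̂,n,L) (as a subset of ℝ), then |p − p̃| ≤ √(8 p̃(1−p̃) L / n) + 26 L / (3(n−1)). -/
open Real Set

theorem concaveOn_sqrt_mul_one_sub : ConcaveOn ℝ (Icc 0 1) (fun x : ℝ ↦ √(x * (1 - x))) := by
  have hpoly : ConcaveOn ℝ (Icc (0 : ℝ) 1) (fun x ↦ x * (1 - x)) := by
    simp_rw [mul_one_sub, ← sq]
    exact (concaveOn_id (convex_Icc 0 1)).sub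
      ((Even.convexOn_pow even_two).subset (subset_univ _) (convex_Icc 0 1))
  have himage : Convex ℝ ((fun x : ℝ ↦ x * (1 - x)) '' Icc 0 1) :=
    (isPreconnected_Icc.image _ (by fun_prop)).ordConnected.convex
  have hnonneg : (fun x : ℝ ↦ x * (1 - x)) '' Icc 0 1 ⊆ Ici 0 := by
    rintro _ ⟨x, ⟨hx0, hx1⟩, rfl⟩
    exact mul_nonneg hx0 (sub_nonneg.mpr hx1)
  exact (strictConcaveOn_sqrt.concaveOn.subset hnonneg himage).comp hpoly
    (fun _ _ _ _ hxy ↦ Real.sqrt_le_sqrt hxy)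

theorem abs_sub_le_of_mem_convexHull {s : Set ℝ} {a r x : ℝ} (hs : ∀ y ∈ s, |a - y| ≤ r)
    (hx : x ∈ convexHull ℝ s) : |a - x| ≤ r := by
  have hball : s ⊆ Metric.closedBall a r := fun y hy ↦ by
    rw [Metric.mem_closedBall, dist_comm]
    exact hs y hy
  simpa [dist_comm, Real.dist_eq] using convexHull_min hball (convex_closedBall a r) hx

theorem le_sqrt_mul_one_sub_of_mem_convexHull {s : Set ℝ} {t x : ℝ}
    (hs : ∀ y ∈ s, y ∈ Icc 0 1 ∧ t ≤ √(y * (1 - y))) (hx : x ∈ convexHull ℝ s) :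
    t ≤ √(x * (1 - x)) :=
  (convexHull_min hs (concaveOn_sqrt_mul_one_sub.convex_ge t) hx).2

theorem sqrt_mul_sqrt_le_div_sub_one {L n : ℝ} (hL : 0 ≤ L) (hn : 1 < n) :
    √(8 * L / n) * √(2 * L / (n - 1)) ≤ 4 * L / (n - 1) := by
  have hn1 : 0 < n - 1 := sub_pos.mpr hn
  rw [← Real.sqrt_mul (by positivity), Real.sqrt_le_left (by positivity),
    div_mul_div_comm, div_pow, div_le_div_iff₀ (by positivity) (by positivity)]
  nlinarith [mul_nonneg (mul_nonneg hL hL) hn1.le]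

theorem confSet_convexHull_dist_bound_general
    (phat : ℝ)
    (n : ℕ) (hn : 2 ≤ n) (L : ℝ) (hL : 0 < L)
    (p ptil : ℝ) (hp : p ∈ confSet phat n L)
    (hptil : ptil ∈ convexHull ℝ (confSet phat n L)) :
    |p - ptil| ≤ Real.sqrt (8 * ptil * (1 - ptil) * L / n) + 26 * L / (3 * ((n : ℝ) - 1)) := by
  obtain ⟨-, -, -, -, hp⟩ := hp
  have hn1 : (1 : ℝ) < n := by exact_mod_cast hn
  have hptil_near : |phat - ptil| ≤
      √(2 * phat * (1 - phat) * L / n) + 7 * L / (3 * ((n : ℝ) - 1)) :=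
    abs_sub_le_of_mem_convexHull (fun _ hq ↦ hq.2.2.2.2) hptil
  have hvar : √(phat * (1 - phat)) ≤ √(ptil * (1 - ptil)) + √(2 * L / (n - 1)) := by
    have := le_sqrt_mul_one_sub_of_mem_convexHull
      (t := √(phat * (1 - phat)) - √(2 * L / (n - 1)))
      (fun _ hq ↦ ⟨⟨hq.1, hq.2.1⟩, by linarith [(abs_le.mp hq.2.2.1).1]⟩) hptil
    linarith
  have h8 : 0 ≤ 8 * L / n := by positivity
  calc |p - ptil| ≤ |phat - p| + |phat - ptil| := by
        simpa only [abs_sub_comm p phat] using abs_sub_le p phat ptil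
    _ ≤ 2 * (√(2 * phat * (1 - phat) * L / n) + 7 * L / (3 * ((n : ℝ) - 1))) := by
      linarith
    _ = √(8 * L / n) * √(phat * (1 - phat)) + 14 * L / (3 * ((n : ℝ) - 1)) := by
      rw [← Real.sqrt_mul h8, show 8 * L / n * (phat * (1 - phat)) =
        2 ^ 2 * (2 * phat * (1 - phat) * L / n) by ring, Real.sqrt_mul (by positivity),
        Real.sqrt_sq zero_le_two]
      ring
    _ ≤ √(8 * L / n) * √(ptil * (1 - ptil)) + √(8 * L / n) * √(2 * L / (n - 1)) +
          14 * L / (3 * ((n : ℝ) - 1)) := by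
      linarith [mul_le_mul_of_nonneg_left hvar (Real.sqrt_nonneg (8 * L / n))]
    _ ≤ √(8 * ptil * (1 - ptil) * L / n) + 4 * L / (n - 1) + 14 * L / (3 * ((n : ℝ) - 1)) := by
      rw [← Real.sqrt_mul h8, show 8 * L / n * (ptil * (1 - ptil)) =
        8 * ptil * (1 - ptil) * L / n by ring]
      linarith [sqrt_mul_sqrt_le_div_sub_one hL.le hn1]
    _ = √(8 * ptil * (1 - ptil) * L / n) + 26 * L / (3 * ((n : ℝ) - 1)) := by
      field_simp
      ring

/-- Bound on the distance between a point of the confidence set and a point of its convex hull. -/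
theorem confSet_convexHull_dist_bound
    (phat : ℝ) (hphat0 : 0 ≤ phat) (hphat1 : phat ≤ 1)
    (n : ℕ) (hn : 2 ≤ n) (L : ℝ) (hL : 0 < L)
    (p ptil : ℝ) (hp : p ∈ confSet phat n L)
    (hptil : ptil ∈ convexHull ℝ (confSet phat n L)) :
    |p - ptil| ≤ Real.sqrt (8 * ptil * (1 - ptil) * L / n) + 26 * L / (3 * ((n : ℝ) - 1)) :=
  confSet_convexHull_dist_bound_general phat n hn L hL p ptil hp hptil
end

section
/- Assume all rewards are nonnegative (r_t(s) ≥ 0 for all t, s). Fix 1 ≤ i < j ≤ H, a state s ∈ S, constants c₁, c₂ ≥ 0, and a subset N ⊆ S such that p_i(s,s') = 0 and p̃_i(s,s') = 0 for all s' ∉ N. If |p_i(s,s') − p̃_i(s,s')| ≤ c₁ + c₂·√(p̃_i(s,s')(1−p̃_i(s,s'))) for all s' ∈ N, then |((P_i − P̃_i) Ṽ_{i+1:j})(s)| ≤ c₁·|N|·‖Ṽ_{i+1:j}‖_∞ + c₂·√|N|·σ̃_{i:j}(s), where ‖f‖_∞ := max_{s'∈S} |f(s')|. -/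
open Finset

/-- The sup-norm `‖f‖_∞ = max_{s} |f s|` of a function on a finite nonempty type. -/
noncomputable def supNorm {S : Type*} [Fintype S] [Nonempty S] (f : S → ℝ) : ℝ :=
  Finset.univ.sup' Finset.univ_nonempty (fun s => |f s|)

/-!
Since `p` and `q` have the same mass on `N`, the difference `∑ (p - q) V` does not change when
`V` is centred at its `q`-mean `m`. A term with `|p - q| ≤ c₁` contributes at most `c₁ |V - m|`,
and `|V - m| ≤ ‖V‖_∞` because both `V` and `m` lie in `[0, ‖V‖_∞]`. A term with
`|p - q| ≤ c₂ √(q (1 - q))` contributes at most `c₂ √q |V - m|`, and Cauchy–Schwarz over `N`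
bounds the sum of these by `c₂ √|N| √(∑ q (V - m)²) = c₂ √|N| σ`.
-/

section WeightedSums

variable {ι : Type*} (N : Finset ι) (p q : ι → ℝ)

theorem sum_sub_mul_eq_sum_sub_mul_sub (hpq : ∑ x ∈ N, p x = ∑ x ∈ N, q x)
    (f : ι → ℝ) (m : ℝ) :
    ∑ x ∈ N, (p x - q x) * f x = ∑ x ∈ N, (p x - q x) * (f x - m) := by
  have hzero : ∑ x ∈ N, (p x - q x) = 0 := by rw [sum_sub_distrib, hpq, sub_self]
  simp only [mul_sub, sum_sub_distrib (f := fun x => (p x - q x) * f x), ← sum_mul, hzero,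
    zero_mul, sub_zero]

theorem sum_sqrt_mul_one_sub_mul_abs_le (hq : ∀ x ∈ N, 0 ≤ q x) (g : ι → ℝ) :
    ∑ x ∈ N, √(q x * (1 - q x)) * |g x| ≤ √(#N : ℝ) * √(∑ x ∈ N, q x * g x ^ 2) := by
  have hterm : ∀ x ∈ N, √(q x * (1 - q x)) * |g x| ≤ 1 * (√(q x) * |g x|) := fun x hx => by
    rw [one_mul]
    gcongr
    nlinarith [hq x hx]
  refine (sum_le_sum hterm).trans ((Real.sum_mul_le_sqrt_mul_sqrt N _ _).trans_eq ?_)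
  congr 2
  · simp
  · refine sum_congr rfl fun x hx => ?_
    rw [mul_pow, Real.sq_sqrt (hq x hx), sq_abs]

theorem abs_sum_sub_mul_le {g : ι → ℝ} {M c₁ c₂ : ℝ} (hc₁ : 0 ≤ c₁) (hc₂ : 0 ≤ c₂)
    (hq : ∀ x ∈ N, 0 ≤ q x) (hg : ∀ x ∈ N, |g x| ≤ M)
    (hpq : ∀ x ∈ N, |p x - q x| ≤ c₁ + c₂ * √(q x * (1 - q x))) :
    |∑ x ∈ N, (p x - q x) * g x| ≤
      c₁ * #N * M + c₂ * √(#N : ℝ) * √(∑ x ∈ N, q x * g x ^ 2) := by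
  calc |∑ x ∈ N, (p x - q x) * g x|
      ≤ ∑ x ∈ N, |p x - q x| * |g x| := by
        simpa only [abs_mul] using abs_sum_le_sum_abs (fun x => (p x - q x) * g x) N
    _ ≤ ∑ x ∈ N, (c₁ + c₂ * √(q x * (1 - q x))) * |g x| :=
        sum_le_sum fun x hx => mul_le_mul_of_nonneg_right (hpq x hx) (abs_nonneg _)
    _ = c₁ * ∑ x ∈ N, |g x| + c₂ * ∑ x ∈ N, √(q x * (1 - q x)) * |g x| := by
        simp only [add_mul, sum_add_distrib, mul_sum, mul_assoc]
    _ ≤ c₁ * (#N * M) + c₂ * (√(#N : ℝ) * √(∑ x ∈ N, q x * g x ^ 2)) := by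
        gcongr
        · simpa using sum_le_sum hg
        · exact sum_sqrt_mul_one_sub_mul_abs_le N q hq g
    _ = c₁ * #N * M + c₂ * √(#N : ℝ) * √(∑ x ∈ N, q x * g x ^ 2) := by ring

end WeightedSums

section ValueFunctions

variable {S : Type*} [Fintype S]

theorem abs_le_supNorm [Nonempty S] (f : S → ℝ) (s : S) : |f s| ≤ supNorm f :=
  le_sup' (fun x => |f x|) (mem_univ s)

theorem Pop_nonneg {p : ℕ → S → S → ℝ} {t : ℕ} {f : S → ℝ} {s : S}
    (hp : ∀ s', 0 ≤ p t s s') (hf : ∀ s', 0 ≤ f s') : 0 ≤ Pop p t f s :=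
  sum_nonneg fun s' _ => mul_nonneg (hp s') (hf s')

theorem Pop_le_supNorm [Nonempty S] {p : ℕ → S → S → ℝ} {t : ℕ} {s : S}
    (hp : ∀ s', 0 ≤ p t s s') (hp_sum : ∑ s', p t s s' = 1) (f : S → ℝ) :
    Pop p t f s ≤ supNorm f :=
  calc Pop p t f s ≤ ∑ s', p t s s' * supNorm f :=
        sum_le_sum fun s' _ =>
          mul_le_mul_of_nonneg_left ((le_abs_self _).trans (abs_le_supNorm f s')) (hp s')
    _ = supNorm f := by rw [← sum_mul, hp_sum, one_mul]

theorem Pop_sub_Pop_eq_sum_of_support {p q : ℕ → S → S → ℝ} {t : ℕ} {s : S} {N : Finset S}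
    (hsupp : ∀ s' ∉ N, p t s s' = 0 ∧ q t s s' = 0) (f : S → ℝ) :
    Pop p t f s - Pop q t f s = ∑ s' ∈ N, (p t s s' - q t s s') * f s' := by
  rw [Pop, Pop, ← sum_sub_distrib]
  refine (sum_subset (subset_univ N) fun s' _ hs' => ?_).symm.trans (sum_congr rfl fun _ _ => ?_)
  · simp [(hsupp s' hs').1, (hsupp s' hs').2]
  · ring

theorem Vf_nonneg (q : ℕ → S → S → ℝ) {r : ℕ → S → ℝ} (hr : ∀ t s, 0 ≤ r t s) (i j : ℕ)
    (hq : ∀ t, i ≤ t → t < j → ∀ s s', 0 ≤ q t s s') (s : S) :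
    0 ≤ Vf q r i j s := by
  rw [Vf]
  split
  case isTrue hij =>
    exact add_nonneg (hr i s) <| Pop_nonneg (hq i le_rfl hij s) <|
      Vf_nonneg q hr (i + 1) j fun t ht htj => hq t (by omega) htj
  case isFalse => exact hr j s
termination_by j - i

end ValueFunctions

theorem expected_value_difference_bound_general
    {S : Type*} [Fintype S] [Nonempty S] (H : ℕ)
    (r : ℕ → S → ℝ) (p q : ℕ → S → S → ℝ)
    (hr : ∀ t, ∀ s : S, 0 ≤ r t s)
    (hp_sum : ∀ t, 1 ≤ t → t ≤ H → ∀ s, ∑ s', p t s s' = 1)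
    (hq_nonneg : ∀ t, 1 ≤ t → t ≤ H → ∀ s s', 0 ≤ q t s s')
    (hq_sum : ∀ t, 1 ≤ t → t ≤ H → ∀ s, ∑ s', q t s s' = 1)
    (i j : ℕ) (hi : 1 ≤ i) (hij : i < j) (hj : j ≤ H) (s : S)
    (c₁ c₂ : ℝ) (hc₁ : 0 ≤ c₁) (hc₂ : 0 ≤ c₂)
    (N : Finset S)
    (hsupp : ∀ s' ∉ N, p i s s' = 0 ∧ q i s s' = 0)
    (hbound : ∀ s' ∈ N,
      |p i s s' - q i s s'| ≤ c₁ + c₂ * Real.sqrt (q i s s' * (1 - q i s s'))) :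
    |Pop p i (Vf q r (i + 1) j) s - Pop q i (Vf q r (i + 1) j) s| ≤
      c₁ * N.card * supNorm (Vf q r (i + 1) j) +
        c₂ * Real.sqrt N.card * Real.sqrt (sigmaSq q r i j s) := by
  set V := Vf q r (i + 1) j
  set m := Pop q i V s
  have hq : ∀ s', 0 ≤ q i s s' := hq_nonneg i hi (by omega) s
  have hV : ∀ s', 0 ≤ V s' :=
    Vf_nonneg q hr (i + 1) j fun t ht htj => hq_nonneg t (by omega) (by omega)
  have hdev : ∀ s' ∈ N, |V s' - m| ≤ supNorm V := fun s' _ =>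
    abs_sub_le_of_nonneg_of_le (hV s') ((le_abs_self _).trans (abs_le_supNorm V s'))
      (Pop_nonneg hq hV) (Pop_le_supNorm hq (hq_sum i hi (by omega) s) V)
  have hmass : ∑ s' ∈ N, p i s s' = ∑ s' ∈ N, q i s s' := by
    rw [sum_subset (subset_univ N) fun s' _ hs' => (hsupp s' hs').1,
      sum_subset (subset_univ N) fun s' _ hs' => (hsupp s' hs').2,
      hp_sum i hi (by omega) s, hq_sum i hi (by omega) s]
  have hσ : sigmaSq q r i j s = ∑ s' ∈ N, q i s s' * (V s' - m) ^ 2 := by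
    rw [sigmaSq, if_pos hij]
    exact (sum_subset (subset_univ N) fun s' _ hs' => by simp [(hsupp s' hs').2]).symm
  rw [Pop_sub_Pop_eq_sum_of_support hsupp, sum_sub_mul_eq_sum_sub_mul_sub N _ _ hmass V m, hσ]
  exact abs_sum_sub_mul_le N _ _ hc₁ hc₂ (fun s' _ => hq s') hdev hbound

/-- Bound on the difference of the expected optimistic value of successor states under
the true and the optimistic model, in terms of the local variance. -/
theorem expected_value_difference_bound
    {S : Type*} [Fintype S] [Nonempty S] (H : ℕ) (hH : 1 ≤ H)
    (r : ℕ → S → ℝ) (p q : ℕ → S → S → ℝ)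
    (hr : ∀ t, ∀ s : S, 0 ≤ r t s)
    (hp_nonneg : ∀ t, 1 ≤ t → t ≤ H → ∀ s s', 0 ≤ p t s s')
    (hp_sum : ∀ t, 1 ≤ t → t ≤ H → ∀ s, ∑ s', p t s s' = 1)
    (hq_nonneg : ∀ t, 1 ≤ t → t ≤ H → ∀ s s', 0 ≤ q t s s')
    (hq_sum : ∀ t, 1 ≤ t → t ≤ H → ∀ s, ∑ s', q t s s' = 1)
    (i j : ℕ) (hi : 1 ≤ i) (hij : i < j) (hj : j ≤ H) (s : S)
    (c₁ c₂ : ℝ) (hc₁ : 0 ≤ c₁) (hc₂ : 0 ≤ c₂)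
    (N : Finset S)
    (hsupp : ∀ s' ∉ N, p i s s' = 0 ∧ q i s s' = 0)
    (hbound : ∀ s' ∈ N,
      |p i s s' - q i s s'| ≤ c₁ + c₂ * Real.sqrt (q i s s' * (1 - q i s s'))) :
    |Pop p i (Vf q r (i + 1) j) s - Pop q i (Vf q r (i + 1) j) s| ≤
      c₁ * N.card * supNorm (Vf q r (i + 1) j) +
        c₂ * Real.sqrt N.card * Real.sqrt (sigmaSq q r i j s) :=
  expected_value_difference_bound_general H r p q hr hp_sum hq_nonneg hq_sum i j hi hij hj s c₁ c₂
    hc₁ hc₂ N hsupp hbound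
end

section
/- Let K ≥ 1 be an integer, z ≥ 0 a real, a₀, a₁, …, a_K nonnegative reals and y₀, y₁, …, y_{K−1} nonnegative reals such that a_k ≤ y_k + z·√(a_{k+1}) for all 0 ≤ k < K. Then a₀ ≤ Σ_{k=0}^{K−1} z^(2−2^(1−k)) · y_k^(2^(−k)) + z^(2−2^(1−K)) · a_K^(2^(−K)), where all exponents are real powers. -/
/-!
Push the bound forward one index at a time: with
`T k t = z ^ (2 - 2 ^ (1 - k)) * t ^ (2 ^ (-k))` we show `a₀ ≤ ∑_{k<j} T k (y k) + T j (a j)`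
by induction on `j`. Since `t ↦ t ^ (2 ^ (-k))` is monotone and subadditive (the exponent is
in `[0, 1]`), `T k (a k) ≤ T k (y k) + T k (z √(a (k+1)))`, and the exponents are chosen so
that `T k (z √t) = T (k+1) t`.
-/

open Finset

noncomputable def sqrtUnrollTerm (z : ℝ) (k : ℕ) (t : ℝ) : ℝ :=
  z ^ ((2 : ℝ) - (2 : ℝ) ^ ((1 : ℝ) - (k : ℝ))) * t ^ ((2 : ℝ) ^ (-(k : ℝ)))

lemma two_rpow_neg_natCast (k : ℕ) : (2 : ℝ) ^ (-(k : ℝ)) = ((2 : ℝ) ^ k)⁻¹ := by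
  rw [Real.rpow_neg zero_le_two, Real.rpow_natCast]

lemma two_rpow_one_sub_natCast (k : ℕ) : (2 : ℝ) ^ ((1 : ℝ) - (k : ℝ)) = 2 * ((2 : ℝ) ^ k)⁻¹ := by
  rw [sub_eq_add_neg, Real.rpow_add zero_lt_two, Real.rpow_one, two_rpow_neg_natCast]

namespace sqrtUnrollTerm

variable {z : ℝ} {k : ℕ} {t s : ℝ}

lemma zero_index (z t : ℝ) : sqrtUnrollTerm z 0 t = t := by
  simp [sqrtUnrollTerm]

lemma mono (hz : 0 ≤ z) (ht : 0 ≤ t) (hts : t ≤ s) :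
    sqrtUnrollTerm z k t ≤ sqrtUnrollTerm z k s := by
  unfold sqrtUnrollTerm
  gcongr

lemma add_le (hz : 0 ≤ z) (ht : 0 ≤ t) (hs : 0 ≤ s) :
    sqrtUnrollTerm z k (t + s) ≤ sqrtUnrollTerm z k t + sqrtUnrollTerm z k s := by
  unfold sqrtUnrollTerm
  rw [← mul_add]
  gcongr
  refine Real.rpow_add_le_add_rpow ht hs (by positivity) ?_
  rw [two_rpow_neg_natCast]
  exact inv_le_one_of_one_le₀ (one_le_pow₀ one_le_two)

lemma mul_sqrt (hz : 0 ≤ z) (ht : 0 ≤ t) :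
    sqrtUnrollTerm z k (z * √t) = sqrtUnrollTerm z (k + 1) t := by
  have hE : 0 ≤ (2 : ℝ) - (2 : ℝ) ^ ((1 : ℝ) - (k : ℝ)) := by
    rw [two_rpow_one_sub_natCast, sub_nonneg]
    nlinarith [inv_le_one_of_one_le₀ (one_le_pow₀ (M₀ := ℝ) one_le_two (n := k))]
  unfold sqrtUnrollTerm
  rw [Real.mul_rpow hz (Real.sqrt_nonneg t), ← mul_assoc,
    ← Real.rpow_add_of_nonneg hz hE (by positivity), Real.sqrt_eq_rpow, ← Real.rpow_mul ht]
  congr 2 <;>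
  · simp only [two_rpow_one_sub_natCast, two_rpow_neg_natCast, pow_succ]
    ring

lemma le_add_of_le_add_mul_sqrt {a y b : ℝ} (hz : 0 ≤ z) (ha : 0 ≤ a) (hy : 0 ≤ y) (hb : 0 ≤ b)
    (hrec : a ≤ y + z * √b) :
    sqrtUnrollTerm z k a ≤ sqrtUnrollTerm z k y + sqrtUnrollTerm z (k + 1) b :=
  calc sqrtUnrollTerm z k a
      ≤ sqrtUnrollTerm z k (y + z * √b) := mono hz ha hrec
    _ ≤ sqrtUnrollTerm z k y + sqrtUnrollTerm z k (z * √b) := add_le hz hy (by positivity)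
    _ = sqrtUnrollTerm z k y + sqrtUnrollTerm z (k + 1) b := by rw [mul_sqrt hz hb]

end sqrtUnrollTerm

theorem recursive_sqrt_bound_unrolled_general
    (K : ℕ) (z : ℝ) (hz : 0 ≤ z) (a y : ℕ → ℝ)
    (ha : ∀ k ≤ K, 0 ≤ a k) (hy : ∀ k < K, 0 ≤ y k)
    (hrec : ∀ k < K, a k ≤ y k + z * Real.sqrt (a (k + 1))) :
    a 0 ≤
      (∑ k ∈ Finset.range K,
        z ^ ((2 : ℝ) - (2 : ℝ) ^ ((1 : ℝ) - (k : ℝ))) * y k ^ ((2 : ℝ) ^ (-(k : ℝ)))) +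
      z ^ ((2 : ℝ) - (2 : ℝ) ^ ((1 : ℝ) - (K : ℝ))) * a K ^ ((2 : ℝ) ^ (-(K : ℝ))) := by
  suffices ∀ j ≤ K, a 0 ≤ (∑ k ∈ range j, sqrtUnrollTerm z k (y k)) + sqrtUnrollTerm z j (a j) from
    this K le_rfl
  intro j
  induction j with
  | zero => simp [sqrtUnrollTerm.zero_index]
  | succ j ih =>
    intro hj
    have step := sqrtUnrollTerm.le_add_of_le_add_mul_sqrt (k := j) hz (ha j (by omega))
      (hy j (by omega)) (ha (j + 1) hj) (hrec j (by omega))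
    rw [sum_range_succ]
    linarith [ih (by omega)]

/-- Unrolling a recursive bound `a_k ≤ y_k + z √(a_{k+1})`. -/
theorem recursive_sqrt_bound_unrolled
    (K : ℕ) (hK : 1 ≤ K) (z : ℝ) (hz : 0 ≤ z) (a y : ℕ → ℝ)
    (ha : ∀ k ≤ K, 0 ≤ a k) (hy : ∀ k < K, 0 ≤ y k)
    (hrec : ∀ k < K, a k ≤ y k + z * Real.sqrt (a (k + 1))) :
    a 0 ≤
      (∑ k ∈ Finset.range K,
        z ^ ((2 : ℝ) - (2 : ℝ) ^ ((1 : ℝ) - (k : ℝ))) * y k ^ ((2 : ℝ) ^ (-(k : ℝ)))) +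
      z ^ ((2 : ℝ) - (2 : ℝ) ^ ((1 : ℝ) - (K : ℝ))) * a K ^ ((2 : ℝ) ^ (-(K : ℝ))) :=
  recursive_sqrt_bound_unrolled_general K z hz a y ha hy hrec
end

section
/- Let I be a finite index set, X a finite set, m > 0 a real, and for each i ∈ I let κ_i ≥ 1 be a real and X_i ⊆ X, with the sets X_i pairwise disjoint. Let w, T : X → ℝ with w(x) ≥ 0 and T(x) ≥ 0 for all x ∈ X, and n : X → ℝ with n(x) > 0 for all x. If for every i ∈ I we have |X_i| ≤ κ_i and n(x) ≥ m·w(x)·κ_i for all x ∈ X_i, then Σ_{i∈I} Σ_{x∈X_i} √(w(x)·T(x)/n(x)) ≤ √(|I| · (Σ_{x∈X} T(x)) / m). -/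
/-!
On each block `Xᵢ` the hypothesis `n ≥ m w κᵢ` gives `w T / n ≤ T / (m κᵢ)` termwise, and Cauchy–Schwarz
over the at most `κᵢ` points of the block turns `∑ √(T / (m κᵢ))` into `√(∑_{Xᵢ} T / m)`: the factor `κᵢ`
cancels. A second Cauchy–Schwarz over the `|I|` blocks, together with disjointness of the blocks,
bounds the total by `√(|I| ∑_X T / m)`.
-/

open Finset

lemma Real.sum_sqrt_le_sqrt_card_mul_sum {β : Type*} (s : Finset β) (f : β → ℝ)
    (hf : ∀ x ∈ s, 0 ≤ f x) :
    ∑ x ∈ s, √(f x) ≤ √(#s * ∑ x ∈ s, f x) := by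
  have hsq : ∑ x ∈ s, f x = ∑ x ∈ s, √(f x) ^ 2 :=
    sum_congr rfl fun x hx => (Real.sq_sqrt (hf x hx)).symm
  rw [hsq]
  exact Real.le_sqrt_of_sq_le (sq_sum_le_card_mul_sum_sq (s := s) (f := fun x => √(f x)))

lemma mul_div_le_div_of_mul_le {w T n c : ℝ} (hc : 0 < c) (hn : 0 < n) (hT : 0 ≤ T)
    (h : c * w ≤ n) : w * T / n ≤ T / c := by
  rw [div_le_div_iff₀ hn hc]
  calc w * T * c = T * (c * w) := by ring
    _ ≤ T * n := mul_le_mul_of_nonneg_left h hT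

lemma sum_sqrt_le_sqrt_sum_div_of_card_le {β : Type*} {s : Finset β} {g T : β → ℝ} {m κ : ℝ}
    (hm : 0 < m) (hcard : (#s : ℝ) ≤ κ) (hT : ∀ x ∈ s, 0 ≤ T x)
    (hg : ∀ x ∈ s, g x ≤ T x / (m * κ)) :
    ∑ x ∈ s, √(g x) ≤ √((∑ x ∈ s, T x) / m) := by
  have hκ : 0 ≤ κ := (Nat.cast_nonneg _).trans hcard
  have hS : 0 ≤ (∑ x ∈ s, T x) / m := div_nonneg (sum_nonneg hT) hm.le
  calc ∑ x ∈ s, √(g x)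
      ≤ ∑ x ∈ s, √(T x / (m * κ)) := sum_le_sum fun x hx => Real.sqrt_le_sqrt (hg x hx)
    _ ≤ √(#s * ∑ x ∈ s, T x / (m * κ)) :=
        Real.sum_sqrt_le_sqrt_card_mul_sum s _ fun x hx => by have := hT x hx; positivity
    _ = √(#s / κ * ((∑ x ∈ s, T x) / m)) := by rw [← sum_div]; ring_nf
    _ ≤ √((∑ x ∈ s, T x) / m) :=
        Real.sqrt_le_sqrt (mul_le_of_le_one_left hS (div_le_one_of_le₀ hcard hκ))

lemma sum_sum_le_sum_of_pairwiseDisjoint {ι α M : Type*} [AddCommMonoid M] [PartialOrder M]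
    [IsOrderedAddMonoid M] {I : Finset ι} {X : Finset α} {Xi : ι → Finset α} {f : α → M}
    (hsub : ∀ i ∈ I, Xi i ⊆ X) (hdisj : (I : Set ι).PairwiseDisjoint Xi)
    (hf : ∀ x ∈ X, 0 ≤ f x) :
    ∑ i ∈ I, ∑ x ∈ Xi i, f x ≤ ∑ x ∈ X, f x := by
  classical
  rw [← sum_biUnion hdisj]
  exact sum_le_sum_of_subset_of_nonneg (biUnion_subset.2 hsub) fun x hx _ => hf x hx

theorem sum_sqrt_weight_bound_general
    {ι α : Type*} (I : Finset ι) (X : Finset α) (m : ℝ) (hm : 0 < m)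
    (κ : ι → ℝ) (Xi : ι → Finset α) (w T n : α → ℝ)
    (hsub : ∀ i ∈ I, Xi i ⊆ X)
    (hdisj : ∀ i ∈ I, ∀ j ∈ I, i ≠ j → Disjoint (Xi i) (Xi j))
    (hT : ∀ x ∈ X, 0 ≤ T x)
    (hn : ∀ x ∈ X, 0 < n x)
    (hcard : ∀ i ∈ I, ((Xi i).card : ℝ) ≤ κ i)
    (hnm : ∀ i ∈ I, ∀ x ∈ Xi i, m * w x * κ i ≤ n x) :
    ∑ i ∈ I, ∑ x ∈ Xi i, Real.sqrt (w x * T x / n x) ≤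
      Real.sqrt ((I.card : ℝ) * (∑ x ∈ X, T x) / m) := by
  have hblock : ∀ i ∈ I, ∑ x ∈ Xi i, √(w x * T x / n x) ≤ √((∑ x ∈ Xi i, T x) / m) := by
    refine fun i hi => sum_sqrt_le_sqrt_sum_div_of_card_le hm (hcard i hi)
      (fun x hx => hT x (hsub i hi hx)) fun x hx => ?_
    have hκ : 0 < κ i :=
      lt_of_lt_of_le (Nat.cast_pos.2 (card_pos.2 ⟨x, hx⟩)) (hcard i hi)
    exact mul_div_le_div_of_mul_le (mul_pos hm hκ) (hn x (hsub i hi hx)) (hT x (hsub i hi hx))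
      (by linarith [hnm i hi x hx])
  calc ∑ i ∈ I, ∑ x ∈ Xi i, √(w x * T x / n x)
      ≤ ∑ i ∈ I, √((∑ x ∈ Xi i, T x) / m) := sum_le_sum hblock
    _ ≤ √(#I * ∑ i ∈ I, (∑ x ∈ Xi i, T x) / m) :=
        Real.sum_sqrt_le_sqrt_card_mul_sum I _ fun i hi =>
          div_nonneg (sum_nonneg fun x hx => hT x (hsub i hi hx)) hm.le
    _ ≤ √(#I * (∑ x ∈ X, T x) / m) := by
        rw [← sum_div, mul_div_assoc]
        gcongr
        exact sum_sum_le_sum_of_pairwiseDisjoint hsub (fun i hi j hj => hdisj i hi j hj) hT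

/-- Cauchy–Schwarz-type bound on the sum of `√(w(x)T(x)/n(x))` over a knownness partition. -/
theorem sum_sqrt_weight_bound
    {ι α : Type*} (I : Finset ι) (X : Finset α) (m : ℝ) (hm : 0 < m)
    (κ : ι → ℝ) (Xi : ι → Finset α) (w T n : α → ℝ)
    (hκ : ∀ i ∈ I, 1 ≤ κ i)
    (hsub : ∀ i ∈ I, Xi i ⊆ X)
    (hdisj : ∀ i ∈ I, ∀ j ∈ I, i ≠ j → Disjoint (Xi i) (Xi j))
    (hw : ∀ x ∈ X, 0 ≤ w x)
    (hT : ∀ x ∈ X, 0 ≤ T x)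
    (hn : ∀ x ∈ X, 0 < n x)
    (hcard : ∀ i ∈ I, ((Xi i).card : ℝ) ≤ κ i)
    (hnm : ∀ i ∈ I, ∀ x ∈ Xi i, m * w x * κ i ≤ n x) :
    ∑ i ∈ I, ∑ x ∈ Xi i, Real.sqrt (w x * T x / n x) ≤
      Real.sqrt ((I.card : ℝ) * (∑ x ∈ X, T x) / m) :=
  sum_sqrt_weight_bound_general I X m hm κ Xi w T n hsub hdisj hT hn hcard hnm
end

section
/- Let n ≥ 1 be an integer, c ∈ (0,1] and η > 0 reals with η·(1 − ln c) ≤ 1. Then for all δ₁, …, δ_n ∈ (0,1] with Σ_{i=1}^n δ_i ≤ n·c, it holds that Σ_{i=1}^n ln(1/δ_i)·𝟙{η·δ_i ≤ c} ≥ n·ln(1/c); that is, the minimum of the objective Σ_{i=1}^n ln(1/δ_i)·𝟙{η·δ_i ≤ c} over the constraint set is attained at δ₁ = ⋯ = δ_n = c. -/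
/-!
Tangent-line trick: the objective is separable, and each summand `g(δ) = ln(1/δ)·𝟙{ηδ ≤ c}`
lies above the tangent line `ln(1/c) + (c - δ)/c` of `ln(1/δ)` at `δ = c`. Where the indicator
is `1` this is concavity of `ln`; where it is `0` we have `δ > c/η ≥ c(1 - ln c)`, so the tangent
line is already negative. Summing, the tangent terms `(c - δᵢ)/c` add up to something
nonnegative under the budget `∑ δᵢ ≤ n c`.
-/

open Finset Real

theorem card_mul_le_sum_of_le_tangent {ι : Type*} (s : Finset ι) (f x : ι → ℝ) {a b c : ℝ}
    (hb : 0 ≤ b) (hf : ∀ i ∈ s, a + b * (c - x i) ≤ f i) (hsum : ∑ i ∈ s, x i ≤ #s * c) :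
    #s * a ≤ ∑ i ∈ s, f i := by
  have hslack : 0 ≤ b * (#s * c - ∑ i ∈ s, x i) := mul_nonneg hb (by linarith)
  calc (#s : ℝ) * a ≤ #s * a + b * (#s * c - ∑ i ∈ s, x i) := by linarith
    _ = ∑ i ∈ s, (a + b * (c - x i)) := by
      simp only [sum_add_distrib, sum_const, nsmul_eq_mul, ← mul_sum, sum_sub_distrib]
    _ ≤ ∑ i ∈ s, f i := sum_le_sum hf

theorem log_one_div_add_inv_mul_sub_le {c d : ℝ} (hc : 0 < c) (hd : 0 < d) :
    log (1 / c) + c⁻¹ * (c - d) ≤ log (1 / d) := by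
  have h := log_le_sub_one_of_pos (div_pos hd hc)
  rw [log_div hd.ne' hc.ne'] at h
  have hdc : c⁻¹ * (c - d) = 1 - d / c := by field_simp
  rw [one_div, one_div, log_inv, log_inv, hdc]
  linarith

theorem log_one_div_add_inv_mul_sub_nonpos {c d η : ℝ} (hc : 0 < c) (hd : 0 < d)
    (hηc : η * (1 - log c) ≤ 1) (hηd : c < η * d) :
    log (1 / c) + c⁻¹ * (c - d) ≤ 0 := by
  have hcd : c * (1 - log c) ≤ d := by
    rcases le_or_gt 0 (1 - log c) with hlog | hlog
    · nlinarith [mul_le_mul_of_nonneg_left hηc hd.le]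
    · nlinarith
  have hdc : c⁻¹ * (c - d) = 1 - d / c := by field_simp
  rw [one_div, log_inv, hdc]
  have : 1 - log c ≤ d / c := by rw [le_div_iff₀ hc]; linarith
  linarith

theorem log_one_div_add_inv_mul_sub_le_indicator {c d η : ℝ} (hc : 0 < c) (hd : 0 < d)
    (hηc : η * (1 - log c) ≤ 1) :
    log (1 / c) + c⁻¹ * (c - d) ≤ log (1 / d) * (if η * d ≤ c then (1 : ℝ) else 0) := by
  split_ifs with hηd
  · simpa using log_one_div_add_inv_mul_sub_le hc hd
  · simpa using log_one_div_add_inv_mul_sub_nonpos hc hd hηc (not_le.mp hηd)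

theorem log_indicator_minimization_general
    (n : ℕ) (c η : ℝ) (hc0 : 0 < c)
    (hηc : η * (1 - Real.log c) ≤ 1)
    (δ : Fin n → ℝ) (hδ0 : ∀ i, 0 < δ i)
    (hsum : ∑ i, δ i ≤ n * c) :
    (n : ℝ) * Real.log (1 / c) ≤
      ∑ i, Real.log (1 / δ i) * (if η * δ i ≤ c then (1 : ℝ) else 0) := by
  have hcard : (#(univ : Finset (Fin n)) : ℝ) = n := by simp
  rw [← hcard] at hsum ⊢
  exact card_mul_le_sum_of_le_tangent univ _ δ (inv_nonneg.mpr hc0.le)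
    (fun i _ => log_one_div_add_inv_mul_sub_le_indicator hc0 (hδ0 i) hηc) hsum

/-- The constrained minimum of `∑ᵢ ln(1/δᵢ)·𝟙{η δᵢ ≤ c}` subject to `∑ᵢ δᵢ ≤ n c`
is attained at `δ₁ = ⋯ = δₙ = c`. -/
theorem log_indicator_minimization
    (n : ℕ) (hn : 1 ≤ n) (c η : ℝ) (hc0 : 0 < c) (hc1 : c ≤ 1)
    (hη : 0 < η) (hηc : η * (1 - Real.log c) ≤ 1)
    (δ : Fin n → ℝ) (hδ0 : ∀ i, 0 < δ i) (hδ1 : ∀ i, δ i ≤ 1)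
    (hsum : ∑ i, δ i ≤ n * c) :
    (n : ℝ) * Real.log (1 / c) ≤
      ∑ i, Real.log (1 / δ i) * (if η * δ i ≤ c then (1 : ℝ) else 0) :=
  log_indicator_minimization_general n c η hc0 hηc δ hδ0 hsum
end

section
/- Let c ∈ (0,1] and γ be reals with γ ≥ 1 − ln c (note this forces γ ≥ 1). Then for every real α with 0 ≤ α < 1/γ, (1−α)·ln((1−α)/(c·(1−γα))) ≥ ln(1/c). -/
/-!
Put `a = 1 - α` and `b = 1 - γα`, both positive. The bound `1 - x⁻¹ ≤ ln x` at `x = a / b` gives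
`a ln (a / b) ≥ a - b = (γ - 1) α ≥ α ln (1/c)`, and `a ln (1/c) + α ln (1/c) = ln (1/c)`.
-/

open Real

lemma sub_le_mul_log_div {a b : ℝ} (ha : 0 < a) (hb : 0 < b) : a - b ≤ a * log (a / b) := by
  calc a - b = a * (1 - (a / b)⁻¹) := by field_simp
    _ ≤ a * log (a / b) := by gcongr; exact one_sub_inv_le_log_of_pos (div_pos ha hb)

/-- Lower bound on the objective `(1−α)·ln((1−α)/(c(1−γα)))` on `[0, 1/γ)`. -/
theorem objective_lower_bound
    (c γ α : ℝ) (hc0 : 0 < c) (hc1 : c ≤ 1) (hγ : 1 - Real.log c ≤ γ)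
    (hα0 : 0 ≤ α) (hα1 : α < 1 / γ) :
    Real.log (1 / c) ≤ (1 - α) * Real.log ((1 - α) / (c * (1 - γ * α))) := by
  have hlog_c : log c ≤ 0 := log_nonpos hc0.le hc1
  have hγ_pos : 0 < γ := by linarith
  have hγα : γ * α < 1 := by rwa [lt_div_iff₀ hγ_pos, mul_comm] at hα1
  have hα : α < 1 := by nlinarith
  have hb : 0 < 1 - γ * α := by linarith
  have ha : 0 < 1 - α := sub_pos.mpr hα
  have hsplit :
      log ((1 - α) / (c * (1 - γ * α))) = log ((1 - α) / (1 - γ * α)) + log (1 / c) := by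
    rw [← log_mul (div_pos ha hb).ne' (one_div_pos.mpr hc0).ne']
    congr 1
    field_simp
  have hratio := sub_le_mul_log_div ha hb
  have hα_log : α * log (1 / c) ≤ α * (γ - 1) := by
    gcongr
    rw [one_div, log_inv]
    linarith
  rw [hsplit, mul_add]
  linarith
end

section
/- Let c > 0 and γ ≥ 1 be reals. The function f(α) := (1−α)·ln((1−α)/(c·(1−γα))) is convex on the interval [0, 1/γ). -/
/-!
With `x = 1 - α` and `y = 1 - γα`, both positive on `[0, 1/γ)` because `γ ≥ 1`, the function is
`x * φ (y / x)` for `φ r = -log (c * r)`, which is convex on `(0, ∞)`. This is the perspective of a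
convex function evaluated along an affine path, and perspectives are jointly convex: at a convex
combination of points, `y / x` is the convex combination of the two ratios with weights
proportional to `x`.
-/

open Set Real

lemma weighted_mediant_eq_convex_combination {x₁ x₂ y₁ y₂ a b : ℝ} (h₁ : x₁ ≠ 0) (h₂ : x₂ ≠ 0)
    (hX : a * x₁ + b * x₂ ≠ 0) :
    (a * y₁ + b * y₂) / (a * x₁ + b * x₂) =
      a * x₁ / (a * x₁ + b * x₂) * (y₁ / x₁) + b * x₂ / (a * x₁ + b * x₂) * (y₂ / x₂) := by
  field_simp

theorem ConvexOn.perspective {t : Set ℝ} {φ : ℝ → ℝ} (hφ : ConvexOn ℝ t φ) :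
    ConvexOn ℝ {p : ℝ × ℝ | 0 < p.1 ∧ p.2 / p.1 ∈ t} (fun p => p.1 * φ (p.2 / p.1)) := by
  have weights : ∀ ⦃x₁ x₂ a b : ℝ⦄, 0 < x₁ → 0 < x₂ → 0 ≤ a → 0 ≤ b → a + b = 1 →
      0 < a * x₁ + b * x₂ ∧ 0 ≤ a * x₁ / (a * x₁ + b * x₂) ∧ 0 ≤ b * x₂ / (a * x₁ + b * x₂) ∧
        a * x₁ / (a * x₁ + b * x₂) + b * x₂ / (a * x₁ + b * x₂) = 1 := by
    intro x₁ x₂ a b h₁ h₂ ha hb hab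
    have hX : 0 < a * x₁ + b * x₂ := convex_Ioi (0 : ℝ) h₁ h₂ ha hb hab
    exact ⟨hX, by positivity, by positivity, by field_simp⟩
  refine ⟨?_, ?_⟩
  · rintro p ⟨hp, hpt⟩ q ⟨hq, hqt⟩ a b ha hb hab
    obtain ⟨hX, hwp, hwq, hw⟩ := weights hp hq ha hb hab
    refine ⟨by simpa using hX, ?_⟩
    simpa [weighted_mediant_eq_convex_combination hp.ne' hq.ne' hX.ne'] using hφ.1 hpt hqt hwp hwq hw
  · rintro p ⟨hp, hpt⟩ q ⟨hq, hqt⟩ a b ha hb hab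
    obtain ⟨hX, hwp, hwq, hw⟩ := weights hp hq ha hb hab
    have := mul_le_mul_of_nonneg_left (hφ.2 hpt hqt hwp hwq hw) hX.le
    simp only [smul_eq_mul, ← weighted_mediant_eq_convex_combination hp.ne' hq.ne' hX.ne'] at this
    convert this using 1
    · simp
    · simp only [smul_eq_mul]
      field_simp

lemma convexOn_neg_log_const_mul {c : ℝ} (hc : c ≠ 0) :
    ConvexOn ℝ (Ioi 0) (fun r => -log (c * r)) := by
  refine (strictConcaveOn_log_Ioi.concaveOn.neg.add_const (-log c)).congr fun r hr => ?_
  simp [log_mul hc (ne_of_gt hr)]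

/-- The function `α ↦ (1−α)·ln((1−α)/(c(1−γα)))` is convex on `[0, 1/γ)`. -/
theorem objective_convex
    (c γ : ℝ) (hc : 0 < c) (hγ : 1 ≤ γ) :
    ConvexOn ℝ (Set.Ico (0 : ℝ) (1 / γ))
      (fun α => (1 - α) * Real.log ((1 - α) / (c * (1 - γ * α)))) := by
  have hγ0 : 0 < γ := zero_lt_one.trans_le hγ
  set g : ℝ →ᵃ[ℝ] ℝ × ℝ := AffineMap.lineMap (1, 1) (0, 1 - γ)
  have hg (α : ℝ) : g α = (1 - α, 1 - γ * α) := by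
    ext <;> simp [g, AffineMap.lineMap_apply] <;> ring
  have hdom : Ico 0 (1 / γ) ⊆ g ⁻¹' {p : ℝ × ℝ | 0 < p.1 ∧ p.2 / p.1 ∈ Ioi 0} := by
    rintro α ⟨-, hαγ⟩
    have hγα : γ * α < 1 := by rwa [lt_div_iff₀ hγ0, mul_comm] at hαγ
    have hα1 : α < 1 := hαγ.trans_le (by rwa [div_le_one hγ0])
    rw [mem_preimage, hg]
    exact ⟨sub_pos.2 hα1, div_pos (sub_pos.2 hγα) (sub_pos.2 hα1)⟩
  refine (((convexOn_neg_log_const_mul hc.ne').perspective.comp_affineMap g).subset hdom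
    (convex_Ico _ _)).congr fun α _ => ?_
  rw [Function.comp_apply, hg, mul_div_assoc', ← inv_div, log_inv, neg_neg]
end
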